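/- Let H be symmetric idempotent, F diagonal ±1, X, y ∈ R^n, and for real β define S^β(F) = X^T(I-H)F(I-H)(y - Xβ). If β_A < β_B and S^{β_B}(F) < S^{β_B}(I), then S^{β_A}(F) < S^{β_A}(I). -/
import Mathlib


open Matrix

/-- Core monotonicity inequality: with `S^β(F) = Xᵀ(I-H)F(I-H)(y - Xβ)`, if
`β_A < β_B` and `S^{β_B}(F) < S^{β_B}(I)`, then `S^{β_A}(F) < S^{β_A}(I)`. -/
theorem stmt_11 {n : ℕ} (H : Matrix (Fin n) (Fin n) ℝ)
    (hH : Hᵀ = H) (hH2 : H * H = H)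
    (d : Fin n → ℝ) (hd : ∀ i, d i = 1 ∨ d i = -1)
    (X y : Fin n → ℝ) (βA βB : ℝ) (hAB : βA < βB)
    (S : ℝ → Matrix (Fin n) (Fin n) ℝ → ℝ)
    (hS : ∀ β G, S β G = X ⬝ᵥ (((1 - H) * G * (1 - H)) *ᵥ (y - β • X)))
    (hB : S βB (Matrix.diagonal d) < S βB 1) :
    S βA (Matrix.diagonal d) < S βA 1 := by
  set F := Matrix.diagonal d with hF
  set P := (1 : Matrix (Fin n) (Fin n) ℝ) - H with hP
  have hPT : Pᵀ = P := by simp [hP, transpose_sub, hH]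
  have key : ∀ β, S β F - S β 1 = X ⬝ᵥ ((P * (F - 1) * P) *ᵥ (y - β • X)) := by
    intro β
    rw [hS, hS]
    rw [show (P * (F - 1) * P) = P * F * P - P * 1 * P by noncomm_ring]
    rw [Matrix.sub_mulVec, dotProduct_sub]
  have hquad : X ⬝ᵥ ((P * (F - 1) * P) *ᵥ X) ≤ 0 := by
    have h1 : (P * (F - 1) * P) *ᵥ X = P *ᵥ ((F - 1) *ᵥ (P *ᵥ X)) := by
      rw [Matrix.mulVec_mulVec, Matrix.mulVec_mulVec]
    rw [h1, dotProduct_mulVec, ← Matrix.mulVec_transpose, hPT]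
    have h2 : (F - 1 : Matrix (Fin n) (Fin n) ℝ)
        = Matrix.diagonal (fun i => d i - 1) := by
      rw [hF, ← Matrix.diagonal_one, Matrix.diagonal_sub]
    rw [h2]
    set v := P *ᵥ X
    have : v ⬝ᵥ (Matrix.diagonal (fun i => d i - 1) *ᵥ v)
        = ∑ i, (d i - 1) * (v i * v i) := by
      simp [dotProduct, Matrix.mulVec_diagonal]
      congr 1; funext i; ring
    rw [this]
    apply Finset.sum_nonpos
    intro i _
    have hvi : 0 ≤ v i * v i := mul_self_nonneg _
    rcases hd i with h | h <;> nlinarith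
  have hyA : y - βA • X = (y - βB • X) + (βB - βA) • X := by
    funext i; simp [Pi.smul_apply, smul_eq_mul]; ring
  have hdec : S βA F - S βA 1 = (S βB F - S βB 1)
      + (βB - βA) * (X ⬝ᵥ ((P * (F - 1) * P) *ᵥ X)) := by
    rw [key, key, hyA, Matrix.mulVec_add, dotProduct_add, Matrix.mulVec_smul,
      dotProduct_smul, smul_eq_mul]
  have hfac : (βB - βA) * (X ⬝ᵥ ((P * (F - 1) * P) *ᵥ X)) ≤ 0 :=
    mul_nonpos_of_nonneg_of_nonpos (by linarith) hquad
  linarith [hdec]
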